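/- Let T be a finite tree with at least three vertices such that T^2 is Hamiltonian. Then T does not contain S(K_{1,3}) as a subgraph, where S(K_{1,3}) is the star K_{1,3} with every edge subdivided once. -/

import Mathlib

/-!
Let `c` be the centre of a copy of `S(K_{1,3})` in `T`, with middle vertices `m₁, m₂, m₃`, and
let `Bᵢ` be the branch of `T` hanging at `c` through `mᵢ`. An edge of `T²` leaving `Bᵢ` starts at
`mᵢ` or ends at `c`. Since `Bᵢ` contains a vertex besides `mᵢ`, and a cycle stays connected after
deleting one vertex, a Hamiltonian cycle of `T²` has an edge between `Bᵢ \ {mᵢ}` and the rest, so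
it joins `c` to each of the three disjoint branches. But `c` has only two neighbours on the cycle.
-/

open SimpleGraph

universe u w

/-- `G` contains `H` as a subgraph. -/
def ContainsSubgraph {V : Type u} {W : Type w} (G : SimpleGraph V) (H : SimpleGraph W) : Prop :=
  ∃ f : H →g G, Function.Injective f

/-- The square of a graph: join distinct vertices at distance at most 2. -/
def square {V : Type u} (G : SimpleGraph V) : SimpleGraph V where
  Adj u v := u ≠ v ∧ (G.Adj u v ∨ ∃ x, G.Adj u x ∧ G.Adj x v)
  symm := by
    refine ⟨?_⟩
    rintro u v ⟨h, h' | ⟨x, h1, h2⟩⟩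
    · exact ⟨h.symm, Or.inl h'.symm⟩
    · exact ⟨h.symm, Or.inr ⟨x, h2.symm, h1.symm⟩⟩
  loopless := ⟨fun u h => h.1 rfl⟩

/-- The star `K_{1,3}` with each edge subdivided once: centre `0`, middle
vertices `1, 2, 3`, leaves `4, 5, 6`. -/
def SK13 : SimpleGraph (Fin 7) :=
  SimpleGraph.fromEdgeSet {s(0,1), s(0,2), s(0,3), s(1,4), s(2,5), s(3,6)}

namespace SimpleGraph

variable {V : Type u} {G : SimpleGraph V}

namespace Walk

lemma toSubgraph_adj_of_mem_darts {u v : V} {p : G.Walk u v} {d : G.Dart} (hd : d ∈ p.darts) :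
    p.toSubgraph.Adj d.fst d.snd :=
  adj_toSubgraph_iff_mem_edges.2 (List.mem_map_of_mem hd)

lemma exists_boundary_dart_of_mem_support [DecidableEq V] {a x y : V} (p : G.Walk a a)
    (S : Set V) (hx : x ∈ p.support) (hy : y ∈ p.support) (hxS : x ∈ S) (hyS : y ∉ S) :
    ∃ d ∈ p.darts, d.fst ∈ S ∧ d.snd ∉ S := by
  by_cases ha : a ∈ S
  · obtain ⟨d, hd, h⟩ := (p.takeUntil y hy).exists_boundary_dart S ha hyS
    exact ⟨d, p.darts_takeUntil_subset_darts hy hd, h⟩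
  · obtain ⟨d, hd, h⟩ := (p.dropUntil x hx).exists_boundary_dart S hxS ha
    exact ⟨d, p.darts_dropUntil_subset_darts hx hd, h⟩

lemma IsCycle.dart_eq_of_snd_eq {a : V} {p : G.Walk a a} (hp : p.IsCycle) {d₁ d₂ : G.Dart}
    (h₁ : d₁ ∈ p.darts) (h₂ : d₂ ∈ p.darts) (h : d₁.snd = d₂.snd) : d₁ = d₂ :=
  List.inj_on_of_nodup_map (p.map_snd_darts ▸ hp.support_nodup) h₁ h₂ h

lemma IsCycle.not_injective_of_forall_toSubgraph_adj {a c : V} {p : G.Walk a a}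
    (hp : p.IsCycle) {v : Fin 3 → V} (hv : ∀ i, p.toSubgraph.Adj c (v i)) :
    ¬ Function.Injective v := by
  intro hinj
  have hdeg := hp.ncard_neighborSet_toSubgraph_eq_two (mem_support_of_adj_toSubgraph (hv 0))
  have hle : (Set.range v).ncard ≤ (p.toSubgraph.neighborSet c).ncard :=
    Set.ncard_le_ncard (Set.range_subset_iff.2 hv) (Set.finite_of_ncard_ne_zero (by omega))
  rw [Set.ncard_range_of_injective hinj, hdeg] at hle
  simp at hle

/-- The cycle enters `S` and leaves `S \ {m}`; both darts cannot end at `m`. -/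
lemma IsHamiltonianCycle.exists_toSubgraph_adj_mem_sdiff_notMem [DecidableEq V] {a : V}
    {p : G.Walk a a} (hp : p.IsHamiltonianCycle) {S : Set V} {m ℓ x : V} (hm : m ∈ S)
    (hℓ : ℓ ∈ S) (hℓm : ℓ ≠ m) (hx : x ∉ S) :
    ∃ u ∈ S, u ≠ m ∧ ∃ v ∉ S, p.toSubgraph.Adj u v := by
  obtain ⟨d₁, hd₁, hd₁x, hd₁S⟩ := p.exists_boundary_dart_of_mem_support Sᶜ
    (hp.mem_support x) (hp.mem_support m) hx (not_not.2 hm)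
  rw [Set.notMem_compl_iff] at hd₁S
  by_cases h₁ : d₁.snd = m
  · obtain ⟨d₂, hd₂, ⟨hd₂S, hd₂m⟩, hd₂out⟩ := p.exists_boundary_dart_of_mem_support (S \ {m})
      (hp.mem_support ℓ) (hp.mem_support x) ⟨hℓ, hℓm⟩ (fun h => hx h.1)
    refine ⟨d₂.fst, hd₂S, hd₂m, d₂.snd, fun h => ?_, toSubgraph_adj_of_mem_darts hd₂⟩
    have h₂ : d₂.snd = m := by_contra fun hne => hd₂out ⟨h, hne⟩
    obtain rfl := hp.isCycle.dart_eq_of_snd_eq hd₁ hd₂ (h₁.trans h₂.symm)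
    exact hd₁x hd₂S
  · exact ⟨d₁.snd, hd₁S, h₁, d₁.fst, hd₁x, (toSubgraph_adj_of_mem_darts hd₁).symm⟩

end Walk

def branch (G : SimpleGraph V) (c m : V) : Set V :=
  {v | (G.deleteEdges {s(c, m)}).Reachable m v}

variable {c m : V}

lemma mem_branch_self : m ∈ G.branch c m := Reachable.refl m

lemma mem_branch_of_adj {ℓ : V} (h : G.Adj m ℓ) (hℓ : ℓ ≠ c) : ℓ ∈ G.branch c m :=
  Adj.reachable <| (deleteEdges_adj ..).2 ⟨h, by simp only [Set.mem_singleton_iff, Sym2.eq_iff]; grind⟩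

lemma IsAcyclic.notMem_branch (hG : G.IsAcyclic) (h : G.Adj c m) : c ∉ G.branch c m :=
  fun hc => isAcyclic_iff_forall_adj_isBridge.mp hG h hc.symm

lemma IsAcyclic.eq_of_adj_of_mem_branch_of_notMem (hG : G.IsAcyclic) (hcm : G.Adj c m)
    {u v : V} (hu : u ∈ G.branch c m) (hv : v ∉ G.branch c m) (huv : G.Adj u v) :
    u = m ∧ v = c := by
  by_cases he : s(u, v) = s(c, m)
  · rcases Sym2.eq_iff.1 he with ⟨rfl, -⟩ | h
    · exact absurd hu (hG.notMem_branch hcm)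
    · exact h
  · exact absurd (hu.trans ((deleteEdges_adj ..).2 ⟨huv, he⟩).reachable) hv

lemma IsAcyclic.square_adj_of_mem_branch_of_notMem (hG : G.IsAcyclic) (hcm : G.Adj c m)
    {u v : V} (hu : u ∈ G.branch c m) (hv : v ∉ G.branch c m) (huv : (square G).Adj u v) :
    u = m ∨ v = c := by
  rcases huv.2 with h | ⟨x, hux, hxv⟩
  · exact Or.inl (hG.eq_of_adj_of_mem_branch_of_notMem hcm hu hv h).1
  · by_cases hx : x ∈ G.branch c m
    · exact Or.inr (hG.eq_of_adj_of_mem_branch_of_notMem hcm hx hv hxv).2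
    · exact Or.inl (hG.eq_of_adj_of_mem_branch_of_notMem hcm hu hx hux).1

lemma IsAcyclic.disjoint_branch (hG : G.IsAcyclic) {m' : V} (hcm : G.Adj c m)
    (hcm' : G.Adj c m') (hne : m ≠ m') : Disjoint (G.branch c m) (G.branch c m') := by
  classical
  refine Set.disjoint_left.2 fun v hv ⟨w⟩ => ?_
  have hm' : m' ∉ G.branch c m := fun h =>
    hne (hG.eq_of_adj_of_mem_branch_of_notMem hcm h (hG.notMem_branch hcm) hcm'.symm).1.symm
  obtain ⟨d, hd, hdS, hdS'⟩ := w.exists_boundary_dart (G.branch c m)ᶜ hm' (not_not.2 hv)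
  rw [Set.notMem_compl_iff] at hdS'
  have hd_adj : G.Adj d.snd d.fst := ((deleteEdges_adj ..).1 d.adj).1.symm
  have hdm : d.snd = m := (hG.eq_of_adj_of_mem_branch_of_notMem hcm hdS' hdS hd_adj).1
  have hm : m ∈ G.branch c m' :=
    ⟨w.takeUntil m (hdm ▸ w.dart_snd_mem_support_of_mem_darts hd)⟩
  exact hne (hG.eq_of_adj_of_mem_branch_of_notMem hcm' hm (hG.notMem_branch hcm') hcm.symm).1

lemma IsAcyclic.exists_toSubgraph_adj_branch_of_isHamiltonianCycle_square [DecidableEq V]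
    (hG : G.IsAcyclic) {ℓ : V} (hcm : G.Adj c m) (hmℓ : G.Adj m ℓ) (hℓc : ℓ ≠ c) {a : V}
    {p : (square G).Walk a a} (hp : p.IsHamiltonianCycle) :
    ∃ v ∈ G.branch c m, p.toSubgraph.Adj c v := by
  obtain ⟨u, hu, hum, v, hv, huv⟩ := hp.exists_toSubgraph_adj_mem_sdiff_notMem mem_branch_self
    (mem_branch_of_adj hmℓ hℓc) hmℓ.ne' (hG.notMem_branch hcm)
  obtain rfl : v = c :=
    (hG.square_adj_of_mem_branch_of_notMem hcm hu hv (p.toSubgraph.adj_sub huv)).resolve_left hum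
  exact ⟨u, hu, huv.symm⟩

end SimpleGraph

lemma exists_spider_of_containsSubgraph_SK13 {V : Type u} {T : SimpleGraph V}
    (h : ContainsSubgraph T SK13) :
    ∃ c : V, ∃ m ℓ : Fin 3 → V, Function.Injective m ∧
      ∀ i, T.Adj c (m i) ∧ T.Adj (m i) (ℓ i) ∧ ℓ i ≠ c := by
  obtain ⟨f, hf⟩ := h
  have hadj : ∀ {i j : Fin 7}, s(i, j) ∈ ({s(0,1), s(0,2), s(0,3), s(1,4), s(2,5), s(3,6)} :
      Set (Sym2 (Fin 7))) → i ≠ j → T.Adj (f i) (f j) :=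
    fun hij hne => f.map_adj ((fromEdgeSet_adj _).2 ⟨hij, hne⟩)
  refine ⟨f 0, ![f 1, f 2, f 3], ![f 4, f 5, f 6], ?_, fun i => ?_⟩
  · intro i j hij
    fin_cases i <;> fin_cases j <;> simp_all [hf.eq_iff]
  · fin_cases i <;> simp [hadj, hf.ne]

/-- If the square of a finite tree on at least three vertices is
Hamiltonian, then the tree does not contain `S(K_{1,3})` as a subgraph. -/
theorem stmt_4 {V : Type u} [Fintype V] [DecidableEq V] (T : SimpleGraph V) (hT : T.IsTree)
    (h3 : 3 ≤ Fintype.card V) (hham : (square T).IsHamiltonian) :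
    ¬ ContainsSubgraph T SK13 := by
  intro hsub
  obtain ⟨c, m, ℓ, hm, hspider⟩ := exists_spider_of_containsSubgraph_SK13 hsub
  obtain ⟨a, p, hp⟩ := hham (by omega)
  choose v hv hcv using fun i =>
    hT.isAcyclic.exists_toSubgraph_adj_branch_of_isHamiltonianCycle_square
      (hspider i).1 (hspider i).2.1 (hspider i).2.2 hp
  refine hp.isCycle.not_injective_of_forall_toSubgraph_adj hcv fun i j hij => by_contra fun hne =>
    (hT.isAcyclic.disjoint_branch (hspider i).1 (hspider j).1 (hm.ne hne)).notMem_of_mem_left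
      (hv i) (hij ▸ hv j)
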